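/- arXiv:1504.04363 — 3 statements merged into one kernel-verified Lean document; each statement's English description precedes it below -/
import Mathlib

section
/- If a run of Ford-Fulkerson does not terminate (infinitely many augmentations), then the amounts pushed along augmenting paths form a summable series, and the flows f_n converge pointwise on every arc. -/
open Finset Filter Topology

/-- In a nonterminating run of Ford–Fulkerson, the positive amounts `x n`
pushed along the augmenting paths have all partial sums bounded by the capacity
`C` of a minimum cut; hence the series `∑ x n` is summable, and since each
augmentation changes each arc's flow by at most `x n`, the flows converge
pointwise on every arc. -/
theorem stmt9 {E : Type*} [Fintype E] (f : ℕ → E → ℝ) (x : ℕ → ℝ) (C : ℝ)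
    (hx : ∀ n, 0 < x n)
    (hbound : ∀ n, ∑ i ∈ Finset.range n, x i ≤ C)
    (hchange : ∀ n e, |f (n + 1) e - f n e| ≤ x n) :
    Summable x ∧ ∀ e : E, ∃ L : ℝ, Tendsto (fun n => f n e) atTop (𝓝 L) := by
  have hs : Summable x := summable_of_sum_range_le (fun n => (hx n).le) hbound
  refine ⟨hs, fun e => ?_⟩
  have hc : CauchySeq (fun n => f n e) := by
    apply cauchySeq_of_dist_le_of_summable x ?_ hs
    intro n
    rw [Real.dist_eq, abs_sub_comm]
    exact hchange n e
  exact cauchySeq_tendsto_of_complete hc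
end

section
/- If D is a chip configuration on a finite graph G that is not q-reduced but is nonnegative away from q, and U_1, U_2 are two sets of vertices not containing q each of which can be fired without sending any vertex into debt, then U_1 ∪ U_2 can also be fired without sending any vertex into debt; hence the fireable sets form a join semilattice. -/
open Finset

/-- The result of firing the set `U` of vertices in chip configuration `D`:
each `v ∈ U` loses one chip per edge from `v` to a vertex outside `U`, and each
`v ∉ U` gains one chip per edge from `v` to a vertex in `U`. -/
def fireSet {V : Type*} [Fintype V] [DecidableEq V] (G : SimpleGraph V)
    [DecidableRel G.Adj] (D : V → ℤ) (U : Finset V) : V → ℤ :=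
  fun v =>
    if v ∈ U then D v - (Finset.univ.filter (fun w => G.Adj v w ∧ w ∉ U)).card
    else D v + (Finset.univ.filter (fun w => G.Adj v w ∧ w ∈ U)).card

/-- `U` is fireable (with respect to the root `q`): `q ∉ U` and firing `U`
sends no vertex other than `q` into debt. -/
def Fireable {V : Type*} [Fintype V] [DecidableEq V] (G : SimpleGraph V)
    [DecidableRel G.Adj] (D : V → ℤ) (q : V) (U : Finset V) : Prop :=
  q ∉ U ∧ ∀ v, v ≠ q → 0 ≤ fireSet G D U v

/-- Auxiliary: firing a larger set is at least as good for a member of the smaller set. -/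
lemma fireSet_mono_of_mem {V : Type*} [Fintype V] [DecidableEq V] (G : SimpleGraph V)
    [DecidableRel G.Adj] (D : V → ℤ) {U W : Finset V} (hUW : U ⊆ W) {v : V}
    (hv : v ∈ U) : fireSet G D U v ≤ fireSet G D W v := by
  simp only [fireSet, if_pos hv, if_pos (hUW hv)]
  have hsub : (Finset.univ.filter (fun w => G.Adj v w ∧ w ∉ W)) ⊆
      (Finset.univ.filter (fun w => G.Adj v w ∧ w ∉ U)) := by
    intro w hw
    simp only [mem_filter] at hw ⊢
    exact ⟨hw.1, hw.2.1, fun h => hw.2.2 (hUW h)⟩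
  have := Finset.card_le_card hsub
  omega

/-- If `D` is nonnegative away from `q` and `U₁`, `U₂` are both fireable
without sending any vertex into debt, then so is `U₁ ∪ U₂`; hence the fireable
sets form a join semilattice. -/
theorem stmt12 {V : Type*} [Fintype V] [DecidableEq V] (G : SimpleGraph V)
    [DecidableRel G.Adj] (D : V → ℤ) (q : V) (hD : ∀ v, v ≠ q → 0 ≤ D v)
    (U₁ U₂ : Finset V) (h1 : Fireable G D q U₁) (h2 : Fireable G D q U₂) :
    Fireable G D q (U₁ ∪ U₂) := by
  refine ⟨fun h => (Finset.mem_union.mp h).elim h1.1 h2.1, fun v hv => ?_⟩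
  by_cases hvU : v ∈ U₁ ∪ U₂
  · rcases Finset.mem_union.mp hvU with hv1 | hv2
    · exact le_trans (h1.2 v hv) (fireSet_mono_of_mem G D Finset.subset_union_left hv1)
    · exact le_trans (h2.2 v hv) (fireSet_mono_of_mem G D Finset.subset_union_right hv2)
  · simp only [fireSet, if_neg hvU]
    have := hD v hv
    positivity
end

section
/- An acyclic orientation of a finite connected graph has a unique source q if and only if every vertex is reachable from q by a directed path. -/
/-- An acyclic orientation `O` of a finite connected graph `G` has `q` as its
unique source if and only if every vertex is reachable from `q` by a directed
path. -/
theorem stmt13 {V : Type*} [Fintype V] (G : SimpleGraph V) (hG : G.Connected)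
    (O : V → V → Prop)
    (hsub : ∀ u v, O u v → G.Adj u v)
    (horient : ∀ u v, G.Adj u v → (O u v ↔ ¬ O v u))
    (hacyc : ∀ v, ¬ Relation.TransGen O v v)
    (q : V) :
    ((∀ u, ¬ O u q) ∧ ∀ v, (∀ u, ¬ O u v) → v = q) ↔
      (∀ v, Relation.ReflTransGen O q v) := by
  constructor
  · rintro ⟨hq, huniq⟩ v
    -- TransGen O is transitive and irreflexive, hence well-founded on a Fintype
    have hwf : WellFounded (Relation.TransGen O) := by
      have : IsTrans V (Relation.TransGen O) := ⟨fun a b c => Relation.TransGen.trans⟩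
      have : IsIrrefl V (Relation.TransGen O) := ⟨hacyc⟩
      exact Finite.wellFounded_of_trans_of_irrefl _
    have hwfO : WellFounded O := Subrelation.wf (fun h => Relation.TransGen.single h) hwf
    have key : ∀ v, ∃ s, (∀ u, ¬ O u s) ∧ Relation.ReflTransGen O s v := by
      intro v
      induction v using hwfO.induction with
      | _ v ih =>
        by_cases hsrc : ∀ u, ¬ O u v
        · exact ⟨v, hsrc, Relation.ReflTransGen.refl⟩
        · push_neg at hsrc
          obtain ⟨u, hu⟩ := hsrc
          obtain ⟨s, hs1, hs2⟩ := ih u hu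
          exact ⟨s, hs1, hs2.tail hu⟩
    obtain ⟨s, hs1, hs2⟩ := key v
    rwa [huniq s hs1] at hs2
  · intro hreach
    refine ⟨fun u hu => ?_, fun v hv => ?_⟩
    · exact hacyc q (Relation.TransGen.trans_right (hreach u) (Relation.TransGen.single hu))
    · rcases Relation.ReflTransGen.cases_tail (hreach v) with h | ⟨u, _, hu⟩
      · exact h
      · exact absurd hu (hv u)
end
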